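/- arXiv:1911.00799 — 4 statements merged into one kernel-verified Lean document; each statement's English description precedes it below -/
import Mathlib

section
/- One-iteration inequality for SPDHG (Lemma 4.1, inequality (4.1)): for every k ≥ 1 and every x ∈ X, y ∈ Y, writing z = (x,y), z^k = (x^k, y^k), it holds that D_g(x^k; z) + D_{f^*}(ŷ^{k+1}; z) ≤ V_k(x^{k−1} − x, y^k − y) − E_k[V_{k+1}(x^k − x, y^{k+1} − y)] − V(z^k − z^{k−1}). -/
/-! Both updates are proximal steps. For convex `h`, minimality of `v = prox_{t h}(u + t q)`
tested along the segment towards any `w` gives the three-point inequality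
`h v - h w ≤ (‖u - w‖² - ‖v - u‖² - ‖v - w‖²) / (2t) + ⟪q, v - w⟫`. Apply it to the primal
step (`q = -A^⊤ ȳ^k`) and to every dual block (`q = A_i x^k`). Since `y^{k+1}` differs from
`y^k` only in block `i_k`, `E_k` of the block-separable `V_{k+1}` has a closed form, and after
expanding the inner products bilinearly the claim is the sum of these prox inequalities. -/

noncomputable section

open Finset

local notation "⟪" x ", " y "⟫" => @inner ℝ _ _ x y

/-- `v = prox_{t·h}(u)`: `v` minimizes `w ↦ h w + ‖w − u‖²/(2t)`. -/
def IsProx {E : Type*} [NormedAddCommGroup E] [InnerProductSpace ℝ E]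
    (t : ℝ) (h : E → ℝ) (u v : E) : Prop :=
  ∀ w, h v + ‖v - u‖ ^ 2 / (2 * t) ≤ h w + ‖w - u‖ ^ 2 / (2 * t)

/-- `A^⊤ y = ∑ i (A i)^* (y i)`. -/
def AT {X : Type*} [NormedAddCommGroup X] [InnerProductSpace ℝ X] [CompleteSpace X]
    {n : ℕ} {Y : Fin n → Type*} [∀ i, NormedAddCommGroup (Y i)]
    [∀ i, InnerProductSpace ℝ (Y i)] [∀ i, CompleteSpace (Y i)]
    (A : ∀ i, X →L[ℝ] Y i) (y : ∀ i, Y i) : X :=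
  ∑ i, (A i).adjoint (y i)

open Filter Topology

lemma nonneg_of_forall_add_mul_nonneg {a b : ℝ} (h : ∀ θ ∈ Set.Ioc (0 : ℝ) 1, 0 ≤ a + θ * b) :
    0 ≤ a := by
  have hlim : Tendsto (fun θ : ℝ => a + θ * b) (𝓝[>] 0) (𝓝 a) := by
    have : Continuous fun θ : ℝ => a + θ * b := by fun_prop
    simpa using (this.tendsto 0).mono_left nhdsWithin_le_nhds
  exact ge_of_tendsto hlim (eventually_of_mem (Ioc_mem_nhdsGT one_pos) h)

namespace IsProx

variable {E : Type*} [NormedAddCommGroup E] [InnerProductSpace ℝ E]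
  {t : ℝ} {h : E → ℝ} {u v : E}

theorem inner_sub_le (ht : 0 < t) (hh : ConvexOn ℝ Set.univ h) (hv : IsProx t h u v) (w : E) :
    ⟪u - v, w - v⟫ ≤ t * (h w - h v) := by
  suffices 0 ≤ h w - h v + ⟪v - u, w - v⟫ / t by
    rw [← neg_sub v u, inner_neg_left]
    have := mul_nonneg ht.le this
    rw [mul_add, mul_div_cancel₀ _ ht.ne'] at this
    linarith
  refine nonneg_of_forall_add_mul_nonneg (b := ‖w - v‖ ^ 2 / (2 * t)) fun θ ⟨hθ0, hθ1⟩ => ?_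
  have hconv : h (v + θ • (w - v)) ≤ (1 - θ) * h v + θ * h w := by
    have := hh.2 (Set.mem_univ v) (Set.mem_univ w) (sub_nonneg.2 hθ1) hθ0.le (by ring)
    rwa [smul_eq_mul, smul_eq_mul, show (1 - θ) • v + θ • w = v + θ • (w - v) by module] at this
  have hsq : ‖v + θ • (w - v) - u‖ ^ 2
      = ‖v - u‖ ^ 2 + 2 * θ * ⟪v - u, w - v⟫ + θ ^ 2 * ‖w - v‖ ^ 2 := by
    rw [add_sub_right_comm, norm_add_sq_real, real_inner_smul_right, norm_smul, mul_pow,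
      Real.norm_eq_abs, sq_abs]
    ring
  have hmin := hv (v + θ • (w - v))
  rw [hsq] at hmin
  have hscaled : 0 ≤ θ * (h w - h v + ⟪v - u, w - v⟫ / t + θ * (‖w - v‖ ^ 2 / (2 * t))) := by
    have key : θ * (h w - h v + ⟪v - u, w - v⟫ / t + θ * (‖w - v‖ ^ 2 / (2 * t)))
        = (1 - θ) * h v + θ * h w
            + (‖v - u‖ ^ 2 + 2 * θ * ⟪v - u, w - v⟫ + θ ^ 2 * ‖w - v‖ ^ 2) / (2 * t)
          - (h v + ‖v - u‖ ^ 2 / (2 * t)) := by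
      field_simp
      ring
    linarith
  exact nonneg_of_mul_nonneg_right hscaled hθ0

theorem three_point (ht : 0 < t) (hh : ConvexOn ℝ Set.univ h) {q : E}
    (hv : IsProx t h (u + t • q) v) (w : E) :
    h v - h w ≤ t⁻¹ * ((‖u - w‖ ^ 2 - ‖v - u‖ ^ 2 - ‖v - w‖ ^ 2) / 2) + ⟪q, v - w⟫ := by
  have key := hv.inner_sub_le ht hh w
  have hpolar : ⟪u - v, w - v⟫ = (‖v - u‖ ^ 2 + ‖v - w‖ ^ 2 - ‖u - w‖ ^ 2) / 2 := by
    have := norm_sub_sq_real (u - v) (w - v)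
    rw [sub_sub_sub_cancel_right, norm_sub_rev u v, norm_sub_rev w v] at this
    linarith
  rw [add_sub_right_comm, inner_add_left, real_inner_smul_left, hpolar, ← neg_sub v w,
    inner_neg_right] at key
  refine le_of_mul_le_mul_left ?_ ht
  rw [mul_add, ← mul_assoc, mul_inv_cancel₀ ht.ne', one_mul]
  linarith

end IsProx

theorem Finset.sum_mul_sum_update {ι : Type*} [Fintype ι] [DecidableEq ι] {Y : ι → Type*}
    {p : ι → ℝ} (hp : ∑ i, p i = 1) (φ : ∀ i, Y i → ℝ) (f b : ∀ i, Y i) :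
    ∑ l, p l * ∑ i, φ i (Function.update f l (b l) i)
      = ∑ i, φ i (f i) + ∑ i, p i * (φ i (b i) - φ i (f i)) := by
  have hupdate : ∀ l, ∑ i, φ i (Function.update f l (b l) i)
      = ∑ i, φ i (f i) + (φ l (b l) - φ l (f l)) := by
    intro l
    simp only [Function.apply_update φ, sum_update_of_mem (mem_univ l),
      ← add_sum_erase _ _ (mem_univ l), sdiff_singleton_eq_erase]
    ring
  simp only [hupdate, mul_add, sum_add_distrib, ← sum_mul, hp, one_mul]

section SPDHG

variable {X : Type*} [NormedAddCommGroup X] [InnerProductSpace ℝ X]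
  {n : ℕ} {Y : Fin n → Type*} [∀ i, NormedAddCommGroup (Y i)] [∀ i, InnerProductSpace ℝ (Y i)]

/-- `E_k[V_{k+1}(u, y^{k+1} - y)]` with `y^k = y₀`: block `l` of `y₀` is replaced by `ŷ l`
with probability `p l`. -/
theorem sum_mul_lyapunov_update (A : ∀ i, X →L[ℝ] Y i) {p : Fin n → ℝ} (σ : Fin n → ℝ) (τ : ℝ)
    (hp : ∀ i, p i ≠ 0) (hpsum : ∑ i, p i = 1) (u : X) (y₀ ŷ y : ∀ i, Y i) :
    ∑ l, p l *
        ((1 / 2) * (τ⁻¹ * ‖u‖ ^ 2)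
          - (∑ i, (p i)⁻¹ * ⟪A i u, Function.update y₀ l (ŷ l) i - y₀ i⟫)
          + (1 / 2) * (∑ i, (σ i * p i)⁻¹ * ‖Function.update y₀ l (ŷ l) i - y₀ i‖ ^ 2)
          + (1 / 2) * (∑ i, (σ i * p i)⁻¹ * ‖Function.update y₀ l (ŷ l) i - y i‖ ^ 2))
      = (1 / 2) * (τ⁻¹ * ‖u‖ ^ 2) + (1 / 2) * (∑ i, (σ i * p i)⁻¹ * ‖y₀ i - y i‖ ^ 2)
        + ∑ i, (-⟪A i u, ŷ i - y₀ i⟫ + (1 / 2) * ((σ i)⁻¹ * ‖ŷ i - y₀ i‖ ^ 2)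
          + (1 / 2) * ((σ i)⁻¹ * (‖ŷ i - y i‖ ^ 2 - ‖y₀ i - y i‖ ^ 2))) := by
  set φ : ∀ i, Y i → ℝ := fun i v => -((p i)⁻¹ * ⟪A i u, v - y₀ i⟫)
    + (1 / 2) * ((σ i * p i)⁻¹ * ‖v - y₀ i‖ ^ 2) + (1 / 2) * ((σ i * p i)⁻¹ * ‖v - y i‖ ^ 2)
  calc _ = ∑ l, p l * ((1 / 2) * (τ⁻¹ * ‖u‖ ^ 2) + ∑ i, φ i (Function.update y₀ l (ŷ l) i)) := by
        refine sum_congr rfl fun l _ => ?_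
        simp only [φ, sum_add_distrib, sum_neg_distrib, ← mul_sum]
        ring
    _ = (1 / 2) * (τ⁻¹ * ‖u‖ ^ 2) + (∑ i, φ i (y₀ i) + ∑ i, p i * (φ i (ŷ i) - φ i (y₀ i))) := by
        rw [← sum_mul_sum_update hpsum]
        simp only [mul_add, sum_add_distrib, ← sum_mul, hpsum, one_mul]
    _ = _ := by
        rw [add_assoc]
        congr 2
        · simp [φ, mul_sum]
        · refine sum_congr rfl fun i _ => ?_
          simp only [φ, sub_self, inner_zero_right, norm_zero]
          field_simp [hp i]
          ring

variable [CompleteSpace X] [∀ i, CompleteSpace (Y i)]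

theorem inner_AT_left (A : ∀ i, X →L[ℝ] Y i) (y : ∀ i, Y i) (v : X) :
    ⟪AT A y, v⟫ = ∑ i, ⟪A i v, y i⟫ := by
  simp only [AT, sum_inner, ContinuousLinearMap.adjoint_inner_left, real_inner_comm]

end SPDHG

theorem spdhg_one_iteration_inequality_general
    {X : Type*} [NormedAddCommGroup X] [InnerProductSpace ℝ X] [FiniteDimensional ℝ X]
    {n : ℕ} {Y : Fin n → Type*} [∀ i, NormedAddCommGroup (Y i)]
    [∀ i, InnerProductSpace ℝ (Y i)] [∀ i, FiniteDimensional ℝ (Y i)]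
    (g : X → ℝ) (fstar : ∀ i, Y i → ℝ)
    (hg : ConvexOn ℝ Set.univ g) (hfs : ∀ i, ConvexOn ℝ Set.univ (fstar i))
    (A : ∀ i, X →L[ℝ] Y i)
    (p σ : Fin n → ℝ) (τ : ℝ)
    (hp : ∀ i, 0 < p i) (hpsum : ∑ i, p i = 1)
    (hτ : 0 < τ) (hσ : ∀ i, 0 < σ i)
    (xprev : X) (yprev ycur : ∀ i, Y i) (xcur : X)
    (hx : IsProx τ g
      (xprev - τ • AT A (fun j => ycur j + (p j)⁻¹ • (ycur j - yprev j))) xcur)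
    (yh : ∀ i, Y i)
    (hyh : ∀ i, IsProx (σ i) (fstar i) (ycur i + σ i • A i xcur) (yh i)) :
    ∀ (x : X) (y : ∀ i, Y i),
      -- D_g(x^k; z) + D_{f^*}(ŷ^{k+1}; z)
      (g xcur - g x + ⟪AT A y, xcur - x⟫)
        + ((∑ i, fstar i (yh i)) - (∑ i, fstar i (y i)) - ∑ i, ⟪A i x, yh i - y i⟫)
      ≤
      -- V_k(x^{k−1} − x, y^k − y)
      ((1 / 2) * (τ⁻¹ * ‖xprev - x‖ ^ 2)
        - (∑ i, (p i)⁻¹ * ⟪A i (xprev - x), ycur i - yprev i⟫)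
        + (1 / 2) * (∑ i, (σ i * p i)⁻¹ * ‖ycur i - yprev i‖ ^ 2)
        + (1 / 2) * (∑ i, (σ i * p i)⁻¹ * ‖ycur i - y i‖ ^ 2))
      -- − E_k[V_{k+1}(x^k − x, y^{k+1} − y)]
      - (∑ l, p l *
          ((1 / 2) * (τ⁻¹ * ‖xcur - x‖ ^ 2)
            - (∑ i, (p i)⁻¹ * ⟪A i (xcur - x),
                Function.update ycur l (yh l) i - ycur i⟫)
            + (1 / 2) * (∑ i, (σ i * p i)⁻¹ *
                ‖Function.update ycur l (yh l) i - ycur i‖ ^ 2)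
            + (1 / 2) * (∑ i, (σ i * p i)⁻¹ *
                ‖Function.update ycur l (yh l) i - y i‖ ^ 2)))
      -- − V(z^k − z^{k−1})
      - ((1 / 2) * (τ⁻¹ * ‖xcur - xprev‖ ^ 2)
          + (1 / 2) * (∑ i, (σ i * p i)⁻¹ * ‖ycur i - yprev i‖ ^ 2)
          + ∑ i, (p i)⁻¹ * ⟪A i (xcur - xprev), ycur i - yprev i⟫) := by
  intro x y
  have hxprox : IsProx τ g
      (xprev + τ • -AT A (fun j => ycur j + (p j)⁻¹ • (ycur j - yprev j))) xcur := by
    rwa [smul_neg, ← sub_eq_add_neg]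
  have hprimal := hxprox.three_point hτ hg x
  have hdual : ∑ i, (fstar i (yh i) - fstar i (y i)) ≤ ∑ i, ((σ i)⁻¹ *
      ((‖ycur i - y i‖ ^ 2 - ‖yh i - ycur i‖ ^ 2 - ‖yh i - y i‖ ^ 2) / 2)
        + ⟪A i xcur, yh i - y i⟫) :=
    sum_le_sum fun i _ => (hyh i).three_point (hσ i) (hfs i) (y i)
  rw [sum_mul_lyapunov_update A σ τ (fun i => (hp i).ne') hpsum]
  simp only [inner_neg_left, inner_AT_left, map_sub, inner_sub_left, inner_sub_right,
    inner_add_right, real_inner_smul_right, mul_sub, sub_div, mul_div_assoc', sum_add_distrib,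
    sum_sub_distrib, sum_neg_distrib, ← mul_sum, ← sum_div] at hprimal hdual ⊢
  linarith

/-- One-iteration inequality for SPDHG (Lemma 4.1, inequality (4.1)).
At iteration `k`, given the previous iterates `x^{k−1} = xprev`, `y^{k−1} = yprev`,
`y^k = ycur`, the primal update `x^k = xcur = prox_{τ g}(x^{k−1} − τ A^⊤ ȳ^k)` with
`ȳ^k = y^k + P⁻¹(y^k − y^{k−1})`, and the full dual update
`ŷ^{k+1}_i = yh i = prox_{σ_i f_i^*}(y_i^k + σ_i A_i x^k)`, for every `z = (x, y)`:
`D_g(x^k; z) + D_{f^*}(ŷ^{k+1}; z)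
  ≤ V_k(x^{k−1} − x, y^k − y) − E_k[V_{k+1}(x^k − x, y^{k+1} − y)] − V(z^k − z^{k−1})`,
where `E_k` is the `p`-weighted average over the index `i_k` drawn at step `k`
(`y^{k+1}` updates only block `i_k` of `y^k` to `ŷ^{k+1}_{i_k}`). -/
theorem spdhg_one_iteration_inequality
    {X : Type*} [NormedAddCommGroup X] [InnerProductSpace ℝ X] [FiniteDimensional ℝ X]
    {n : ℕ} {Y : Fin n → Type*} [∀ i, NormedAddCommGroup (Y i)]
    [∀ i, InnerProductSpace ℝ (Y i)] [∀ i, FiniteDimensional ℝ (Y i)]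
    (g : X → ℝ) (fstar : ∀ i, Y i → ℝ)
    (hg : ConvexOn ℝ Set.univ g) (hfs : ∀ i, ConvexOn ℝ Set.univ (fstar i))
    (A : ∀ i, X →L[ℝ] Y i)
    (p σ : Fin n → ℝ) (τ γ : ℝ)
    (hp : ∀ i, 0 < p i) (hpsum : ∑ i, p i = 1)
    (hτ : 0 < τ) (hσ : ∀ i, 0 < σ i) (hγ0 : 0 < γ) (hγ1 : γ < 1)
    (hstep : ∀ i, (p i)⁻¹ * τ * σ i * ‖A i‖ ^ 2 ≤ γ ^ 2)
    (xprev : X) (yprev ycur : ∀ i, Y i) (xcur : X)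
    (hx : IsProx τ g
      (xprev - τ • AT A (fun j => ycur j + (p j)⁻¹ • (ycur j - yprev j))) xcur)
    (yh : ∀ i, Y i)
    (hyh : ∀ i, IsProx (σ i) (fstar i) (ycur i + σ i • A i xcur) (yh i)) :
    ∀ (x : X) (y : ∀ i, Y i),
      -- D_g(x^k; z) + D_{f^*}(ŷ^{k+1}; z)
      (g xcur - g x + ⟪AT A y, xcur - x⟫)
        + ((∑ i, fstar i (yh i)) - (∑ i, fstar i (y i)) - ∑ i, ⟪A i x, yh i - y i⟫)
      ≤
      -- V_k(x^{k−1} − x, y^k − y)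
      ((1 / 2) * (τ⁻¹ * ‖xprev - x‖ ^ 2)
        - (∑ i, (p i)⁻¹ * ⟪A i (xprev - x), ycur i - yprev i⟫)
        + (1 / 2) * (∑ i, (σ i * p i)⁻¹ * ‖ycur i - yprev i‖ ^ 2)
        + (1 / 2) * (∑ i, (σ i * p i)⁻¹ * ‖ycur i - y i‖ ^ 2))
      -- − E_k[V_{k+1}(x^k − x, y^{k+1} − y)]
      - (∑ l, p l *
          ((1 / 2) * (τ⁻¹ * ‖xcur - x‖ ^ 2)
            - (∑ i, (p i)⁻¹ * ⟪A i (xcur - x),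
                Function.update ycur l (yh l) i - ycur i⟫)
            + (1 / 2) * (∑ i, (σ i * p i)⁻¹ *
                ‖Function.update ycur l (yh l) i - ycur i‖ ^ 2)
            + (1 / 2) * (∑ i, (σ i * p i)⁻¹ *
                ‖Function.update ycur l (yh l) i - y i‖ ^ 2)))
      -- − V(z^k − z^{k−1})
      - ((1 / 2) * (τ⁻¹ * ‖xcur - xprev‖ ^ 2)
          + (1 / 2) * (∑ i, (σ i * p i)⁻¹ * ‖ycur i - yprev i‖ ^ 2)
          + ∑ i, (p i)⁻¹ * ⟪A i (xcur - xprev), ycur i - yprev i⟫) :=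
  spdhg_one_iteration_inequality_general g fstar hg hfs A p σ τ hp hpsum hτ hσ xprev yprev ycur xcur
    hx yh hyh
end
end

section
/- Fixed points of the SPDHG fixed-point operator are solutions (part of Lemma 4.2): if ((x(1),…,x(n)), (y(1),…,y(n))) is a fixed point of T, i.e. x̂(i) = x(i) and ŷ(i) = y(i) for all i, then each pair (x(i), y(i)) is a primal-dual solution, i.e. 0 ∈ A^⊤ y(i) + ∂g(x(i)) and 0 ∈ A x(i) − ∂f^*(y(i)). -/
/-!
At a fixed point `ŷ(i) = y(i)`, so the extrapolated `ȳ(i)` is `y(i)` itself, and each prox step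
takes the form `v = prox_{t h}(v + t w)`. Comparing `v` with the points `v + s (z - v)` of the
segment towards an arbitrary `z` and using convexity of `h` gives
`⟪w, z - v⟫ ≤ h z - h v + s ‖z - v‖² / (2t)`; letting `s → 0⁺` shows `w ∈ ∂h(v)`, which is the
pair of inclusions claimed.
-/

noncomputable section

open Finset

local notation "⟪" x ", " y "⟫" => @inner ℝ _ _ x y

/-- Convex subdifferential of `h` at `x`. -/
def subdiffAt {E : Type*} [NormedAddCommGroup E] [InnerProductSpace ℝ E]
    (h : E → ℝ) (x : E) : Set E :=
  {v | ∀ z, h x + ⟪v, z - x⟫ ≤ h z}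

theorem le_of_forall_le_add_mul {a b c : ℝ} (h : ∀ s, 0 < s → s ≤ 1 → a ≤ b + s * c) :
    a ≤ b := by
  have hlim : Filter.Tendsto (fun s => b + s * c) (nhdsWithin 0 (Set.Ioi 0)) (nhds b) :=
    ((by fun_prop : Continuous fun s : ℝ => b + s * c).tendsto' 0 b (by simp)).mono_left
      nhdsWithin_le_nhds
  refine ge_of_tendsto hlim ?_
  filter_upwards [Ioo_mem_nhdsGT (zero_lt_one' ℝ)] with s hs
  exact h s hs.1 hs.2.le

section Prox

variable {E : Type*} [NormedAddCommGroup E] [InnerProductSpace ℝ E]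
  {t : ℝ} {h : E → ℝ} {u v : E}

theorem IsProx.inner_le_add_mul (ht : 0 < t) (hh : ConvexOn ℝ Set.univ h)
    (hv : IsProx t h u v) (z : E) {s : ℝ} (hs₀ : 0 < s) (hs₁ : s ≤ 1) :
    ⟪u - v, z - v⟫ ≤ t * (h z - h v) + s * (‖z - v‖ ^ 2 / 2) := by
  have hconv : h (v + s • (z - v)) ≤ (1 - s) * h v + s * h z := by
    have hseg : (1 - s) • v + s • z = v + s • (z - v) := by module
    simpa only [hseg, smul_eq_mul] using
      hh.2 (Set.mem_univ v) (Set.mem_univ z) (by linarith : (0:ℝ) ≤ 1 - s) hs₀.le (by ring)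
  have hnorm : ‖v + s • (z - v) - u‖ ^ 2
      = ‖v - u‖ ^ 2 + s * (s * ‖z - v‖ ^ 2 - 2 * ⟪u - v, z - v⟫) := by
    rw [show v + s • (z - v) - u = (v - u) + s • (z - v) by abel, norm_add_sq_real,
      real_inner_smul_right, norm_smul, mul_pow, Real.norm_eq_abs, sq_abs,
      ← neg_sub u v, inner_neg_left]
    ring
  have hmin := hv (v + s • (z - v))
  rw [hnorm, add_div] at hmin
  have key : s * (h v - h z) ≤ s * ((s * ‖z - v‖ ^ 2 - 2 * ⟪u - v, z - v⟫) / (2 * t)) := by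
    rw [mul_div_assoc] at hmin
    linarith
  have hdiv := le_of_mul_le_mul_left key hs₀
  rw [le_div_iff₀ (by positivity)] at hdiv
  linarith

theorem IsProx.smul_sub_mem_subdiffAt (ht : 0 < t) (hh : ConvexOn ℝ Set.univ h)
    (hv : IsProx t h u v) : t⁻¹ • (u - v) ∈ subdiffAt h v := by
  intro z
  rw [real_inner_smul_left, ← le_sub_iff_add_le', inv_mul_le_iff₀ ht]
  exact le_of_forall_le_add_mul fun s hs₀ hs₁ => hv.inner_le_add_mul ht hh z hs₀ hs₁

theorem IsProx.mem_subdiffAt_of_add_smul (ht : 0 < t) (hh : ConvexOn ℝ Set.univ h) {w : E}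
    (hv : IsProx t h (v + t • w) v) : w ∈ subdiffAt h v := by
  simpa [ht.ne'] using hv.smul_sub_mem_subdiffAt ht hh

end Prox

theorem spdhg_fixed_points_are_solutions_general
    {X : Type*} [NormedAddCommGroup X] [InnerProductSpace ℝ X] [FiniteDimensional ℝ X]
    {n : ℕ} {Y : Fin n → Type*} [∀ i, NormedAddCommGroup (Y i)]
    [∀ i, InnerProductSpace ℝ (Y i)] [∀ i, FiniteDimensional ℝ (Y i)]
    (g : X → ℝ) (fstar : ∀ i, Y i → ℝ)
    (hg : ConvexOn ℝ Set.univ g) (hfs : ∀ i, ConvexOn ℝ Set.univ (fstar i))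
    (A : ∀ i, X →L[ℝ] Y i)
    (p σ : Fin n → ℝ) (τ : ℝ)
    (hτ : 0 < τ) (hσ : ∀ i, 0 < σ i)
    (xv : Fin n → X) (yv : Fin n → ∀ j, Y j)
    (yhat : Fin n → ∀ j, Y j) (xhat : Fin n → X)
    (hyhat : ∀ i j, IsProx (σ j) (fstar j) (yv i j + σ j • A j (xv i)) (yhat i j))
    (hxhat : ∀ i, IsProx τ g
      (xv i - τ • AT A (Function.update (yv i) i
        (yv i i + (1 + (p i)⁻¹) • (yhat i i - yv i i)))) (xhat i))
    (hfixx : ∀ i, xhat i = xv i) (hfixy : ∀ i, yhat i = yv i) :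
    ∀ i, (-(AT A (yv i)) ∈ subdiffAt g (xv i))
      ∧ ∀ j, A j (xv i) ∈ subdiffAt (fstar j) (yv i j) := by
  intro i
  have hybar : Function.update (yv i) i
      (yv i i + (1 + (p i)⁻¹) • (yhat i i - yv i i)) = yv i := by
    rw [hfixy i, sub_self, smul_zero, add_zero, Function.update_eq_self]
  refine ⟨?_, fun j => ?_⟩
  · have hx := hxhat i
    rw [hybar, hfixx i, sub_eq_add_neg, ← smul_neg] at hx
    exact hx.mem_subdiffAt_of_add_smul hτ hg
  · have hy := hyhat i j
    rw [hfixy i] at hy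
    exact hy.mem_subdiffAt_of_add_smul (hσ j) (hfs j)

/-- Fixed points of the SPDHG fixed-point operator are primal-dual solutions
(part of Lemma 4.2).  The operator `T` maps `(x(1),…,x(n),y(1),…,y(n))` to
`(x̂(1),…,x̂(n),ŷ(1),…,ŷ(n))` where `ŷ(i) = prox_{D(σ) f^*}(y(i) + D(σ)Ax(i))`,
`ȳ(i)` changes only block `i` of `y(i)` to `y(i)_i + (1 + p_i⁻¹)(ŷ(i)_i − y(i)_i)`,
and `x̂(i) = prox_{τ g}(x(i) − τ A^⊤ ȳ(i))`.  If `x̂(i) = x(i)` and `ŷ(i) = y(i)`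
for all `i`, then each `(x(i), y(i))` satisfies `0 ∈ A^⊤ y(i) + ∂g(x(i))` and
`0 ∈ A x(i) − ∂f^*(y(i))`. -/
theorem spdhg_fixed_points_are_solutions
    {X : Type*} [NormedAddCommGroup X] [InnerProductSpace ℝ X] [FiniteDimensional ℝ X]
    {n : ℕ} {Y : Fin n → Type*} [∀ i, NormedAddCommGroup (Y i)]
    [∀ i, InnerProductSpace ℝ (Y i)] [∀ i, FiniteDimensional ℝ (Y i)]
    (g : X → ℝ) (fstar : ∀ i, Y i → ℝ)
    (hg : ConvexOn ℝ Set.univ g) (hfs : ∀ i, ConvexOn ℝ Set.univ (fstar i))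
    (A : ∀ i, X →L[ℝ] Y i)
    (p σ : Fin n → ℝ) (τ : ℝ)
    (hp : ∀ i, 0 < p i) (hpsum : ∑ i, p i = 1)
    (hτ : 0 < τ) (hσ : ∀ i, 0 < σ i)
    (xv : Fin n → X) (yv : Fin n → ∀ j, Y j)
    (yhat : Fin n → ∀ j, Y j) (xhat : Fin n → X)
    (hyhat : ∀ i j, IsProx (σ j) (fstar j) (yv i j + σ j • A j (xv i)) (yhat i j))
    (hxhat : ∀ i, IsProx τ g
      (xv i - τ • AT A (Function.update (yv i) i
        (yv i i + (1 + (p i)⁻¹) • (yhat i i - yv i i)))) (xhat i))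
    (hfixx : ∀ i, xhat i = xv i) (hfixy : ∀ i, yhat i = yv i) :
    ∀ i, (-(AT A (yv i)) ∈ subdiffAt g (xv i))
      ∧ ∀ j, A j (xv i) ∈ subdiffAt (fstar j) (yv i j) :=
  spdhg_fixed_points_are_solutions_general g fstar hg hfs A p σ τ hτ hσ xv yv yhat xhat hyhat hxhat
    hfixx hfixy
end
end

section
/- Supermartingale-type decrease towards a fixed solution (key inequality in the proof of Theorem 4.3): for any fixed primal-dual solution z^* = (x^*, y^*) ∈ Z^* and every k ≥ 1, E_k[V_{k+1}(x^k − x^*, y^{k+1} − y^*)] ≤ V_k(x^{k−1} − x^*, y^k − y^*) − V(z^k − z^{k−1}), where z^k = (x^k, y^k). -/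
noncomputable section

open Finset

local notation "⟪" x ", " y "⟫" => @inner ℝ _ _ x y

/-! A prox point `v` of `t·h` at `u` satisfies `(u - v)/t ∈ ∂h(v)`. Adding this subgradient
inequality to the optimality condition of the solution at the same pair of points gives a
three-point inequality for each step of the iteration: the primal step couples `x^k − x^*`
with `ȳ^k − y^*`, the dual step in block `i` couples `A_i(x^k − x^*)` with `y_i^{k+1} − y_i^*`.
Averaging over the sampled block with the weights `p_i` cancels the factors `p_i^{-1}` in
`V_{k+1}`, so the dual couplings absorb the `y^k − y^*` part of the primal one, and the
extrapolation part `P^{-1}(y^k − y^{k−1})` is what `V_k − V(z^k − z^{k−1})` leaves over. -/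

open Filter Topology

theorem nonpos_of_forall_le_mul {a C : ℝ} (h : ∀ s, 0 < s → s ≤ 1 → a ≤ s * C) : a ≤ 0 := by
  have hlim : Tendsto (fun s => s * C) (𝓝[>] 0) (𝓝 0) := by
    simpa using tendsto_nhdsWithin_of_tendsto_nhds ((continuous_mul_const C).tendsto 0)
  exact ge_of_tendsto hlim <| by
    filter_upwards [Ioc_mem_nhdsGT one_pos] with s hs using h s hs.1 hs.2

section Prox

variable {E : Type*} [NormedAddCommGroup E] [InnerProductSpace ℝ E] {h : E → ℝ} {t : ℝ}

theorem IsProx.inv_smul_sub_mem_subdiffAt (hc : ConvexOn ℝ Set.univ h) (ht : 0 < t)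
    {u v : E} (hpx : IsProx t h u v) : t⁻¹ • (u - v) ∈ subdiffAt h v := by
  intro w
  rw [real_inner_smul_left]
  suffices ∀ s, 0 < s → s ≤ 1 →
      h v - h w + t⁻¹ * ⟪u - v, w - v⟫ ≤ s * (‖w - v‖ ^ 2 / (2 * t)) by
    linarith [nonpos_of_forall_le_mul this]
  -- compare `v` with the points `v + s • (w - v)` of the segment and let `s → 0`
  intro s hs0 hs1
  have hmin := hpx (v + s • (w - v))
  have hconv : h (v + s • (w - v)) ≤ (1 - s) * h v + s * h w := by
    have hseg : (1 - s) • v + s • w = v + s • (w - v) := by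
      rw [sub_smul, one_smul, smul_sub]; abel
    simpa [hseg] using hc.2 (Set.mem_univ v) (Set.mem_univ w) (sub_nonneg.2 hs1) hs0.le
      (by ring)
  have hsq : ‖v + s • (w - v) - u‖ ^ 2
      = ‖v - u‖ ^ 2 - 2 * s * ⟪u - v, w - v⟫ + s ^ 2 * ‖w - v‖ ^ 2 := by
    rw [add_sub_right_comm, norm_add_sq_real, real_inner_smul_right, norm_smul, mul_pow,
      Real.norm_eq_abs, sq_abs, ← neg_sub u v, inner_neg_left]
    ring
  have hstep : s * (h v - h w + t⁻¹ * ⟪u - v, w - v⟫)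
      ≤ s * (s * (‖w - v‖ ^ 2 / (2 * t))) := by
    rw [hsq] at hmin
    have : (‖v - u‖ ^ 2 - 2 * s * ⟪u - v, w - v⟫ + s ^ 2 * ‖w - v‖ ^ 2) / (2 * t)
        = ‖v - u‖ ^ 2 / (2 * t) - s * (t⁻¹ * ⟪u - v, w - v⟫)
          + s * (s * (‖w - v‖ ^ 2 / (2 * t))) := by
      field_simp
    linarith
  exact le_of_mul_le_mul_left hstep hs0

theorem IsProx.three_point_s6 (hc : ConvexOn ℝ Set.univ h) (ht : 0 < t) {a d v w e : E}
    (hpx : IsProx t h (a - t • d) v) (he : e ∈ subdiffAt h w) :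
    ⟪d + e, v - w⟫ + t⁻¹ * (‖v - a‖ ^ 2 + ‖v - w‖ ^ 2 - ‖a - w‖ ^ 2) / 2 ≤ 0 := by
  have hprox := hpx.inv_smul_sub_mem_subdiffAt hc ht w
  have hsol := he v
  have hgrad : t⁻¹ • (a - t • d - v) = -(t⁻¹ • (v - a) + d) := by
    simp only [smul_sub, smul_smul, inv_mul_cancel₀ ht.ne', one_smul]; abel
  have hpar : ‖a - w‖ ^ 2 = ‖v - a‖ ^ 2 + ‖v - w‖ ^ 2 - 2 * ⟪v - a, v - w⟫ := by
    rw [← sub_sub_sub_cancel_left w a v, norm_sub_sq_real, real_inner_comm]; ring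
  rw [hgrad, inner_neg_left, ← neg_sub v w, inner_neg_right, neg_neg, inner_add_left,
    real_inner_smul_left] at hprox
  have hquad : t⁻¹ * (‖v - a‖ ^ 2 + ‖v - w‖ ^ 2 - ‖a - w‖ ^ 2) / 2 = t⁻¹ * ⟪v - a, v - w⟫ := by
    rw [hpar]; ring
  rw [hquad, inner_add_left]
  linarith

end Prox

theorem inner_AT {X : Type*} [NormedAddCommGroup X] [InnerProductSpace ℝ X] [CompleteSpace X]
    {n : ℕ} {Y : Fin n → Type*} [∀ i, NormedAddCommGroup (Y i)]
    [∀ i, InnerProductSpace ℝ (Y i)] [∀ i, CompleteSpace (Y i)]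
    (A : ∀ i, X →L[ℝ] Y i) (y : ∀ i, Y i) (x : X) : ⟪AT A y, x⟫ = ∑ i, ⟪y i, A i x⟫ := by
  simp [AT, sum_inner, ContinuousLinearMap.adjoint_inner_left]

theorem Fintype.sum_update_eq_add_sub {ι : Type*} [Fintype ι] [DecidableEq ι]
    {β : ι → Type*} (φ : ∀ i, β i → ℝ) (y : ∀ i, β i) (l : ι) (z : β l) :
    ∑ i, φ i (Function.update y l z i) = ∑ i, φ i (y i) + (φ l z - φ l (y l)) := by
  rw [← sub_eq_iff_eq_add', ← sum_sub_distrib,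
    Fintype.sum_eq_single l fun i hil => by simp [Function.update_of_ne hil]]
  simp

theorem Fintype.sum_update_eq_self_of_eq_zero {ι : Type*} [Fintype ι] [DecidableEq ι]
    {β : ι → Type*} (φ : ∀ i, β i → ℝ) {y : ∀ i, β i} (hφ : ∀ i, φ i (y i) = 0) (l : ι)
    (z : β l) : ∑ i, φ i (Function.update y l z i) = φ l z := by
  simp [Fintype.sum_update_eq_add_sub, hφ]

theorem sum_mul_add_inv_mul {ι : Type*} [Fintype ι] {p d : ι → ℝ} (hp : ∀ i, p i ≠ 0)
    (hpsum : ∑ i, p i = 1) (c : ℝ) : ∑ i, p i * (c + (p i)⁻¹ * d i) = c + ∑ i, d i := by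
  simp only [mul_add, ← mul_assoc, mul_inv_cancel₀ (hp _), one_mul, sum_add_distrib,
    ← sum_mul, hpsum]

section SPDHG

variable {X : Type*} [NormedAddCommGroup X] [InnerProductSpace ℝ X]
  {n : ℕ} {Y : Fin n → Type*} [∀ i, NormedAddCommGroup (Y i)] [∀ i, InnerProductSpace ℝ (Y i)]
  (A : ∀ i, X →L[ℝ] Y i)

theorem spdhg_primal_estimate [CompleteSpace X] [∀ i, CompleteSpace (Y i)] {g : X → ℝ}
    (hg : ConvexOn ℝ Set.univ g) {p : Fin n → ℝ} {τ : ℝ} (hτ : 0 < τ) {xstar : X} {ystar : ∀ i, Y i}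
    (hsolx : -(AT A ystar) ∈ subdiffAt g xstar) {xprev xcur : X} {yprev ycur : ∀ i, Y i}
    (hx : IsProx τ g
      (xprev - τ • AT A (fun j => ycur j + (p j)⁻¹ • (ycur j - yprev j))) xcur) :
    ∑ i, ⟪A i (xcur - xstar), ycur i - ystar i⟫
      + ∑ i, (p i)⁻¹ * ⟪A i (xcur - xstar), ycur i - yprev i⟫
      + τ⁻¹ * (‖xcur - xprev‖ ^ 2 + ‖xcur - xstar‖ ^ 2 - ‖xprev - xstar‖ ^ 2) / 2 ≤ 0 := by
  have hcoupling : ⟪AT A (fun j => ycur j + (p j)⁻¹ • (ycur j - yprev j)) + -AT A ystar,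
      xcur - xstar⟫ = ∑ i, ⟪A i (xcur - xstar), ycur i - ystar i⟫
        + ∑ i, (p i)⁻¹ * ⟪A i (xcur - xstar), ycur i - yprev i⟫ := by
    rw [inner_add_left, inner_neg_left, inner_AT, inner_AT, ← sub_eq_add_neg,
      ← sum_sub_distrib, ← sum_add_distrib]
    refine sum_congr rfl fun i _ => ?_
    simp only [real_inner_comm (A i _), inner_add_right, inner_sub_right,
      real_inner_smul_right]
    ring
  simpa [hcoupling] using hx.three_point_s6 hg hτ hsolx

theorem spdhg_dual_estimate {fstar : ∀ i, Y i → ℝ} (hfs : ∀ i, ConvexOn ℝ Set.univ (fstar i))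
    {σ : Fin n → ℝ} (hσ : ∀ i, 0 < σ i) {xstar : X} {ystar : ∀ i, Y i}
    (hsoly : ∀ i, A i xstar ∈ subdiffAt (fstar i) (ystar i)) {xcur : X} {ycur yh : ∀ i, Y i}
    (hyh : ∀ i, IsProx (σ i) (fstar i) (ycur i + σ i • A i xcur) (yh i)) (i : Fin n) :
    -⟪A i (xcur - xstar), yh i - ycur i⟫
      + (σ i)⁻¹ * (‖yh i - ycur i‖ ^ 2 + ‖yh i - ystar i‖ ^ 2 - ‖ycur i - ystar i‖ ^ 2) / 2
      ≤ ⟪A i (xcur - xstar), ycur i - ystar i⟫ := by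
  have hprox : IsProx (σ i) (fstar i) (ycur i - σ i • -A i xcur) (yh i) := by
    rw [smul_neg, sub_neg_eq_add]; exact hyh i
  have hthree := hprox.three_point_s6 (hfs i) (hσ i) (hsoly i)
  have hcoupling : ⟪-A i xcur + A i xstar, yh i - ystar i⟫
      = -⟪A i (xcur - xstar), yh i - ycur i⟫ - ⟪A i (xcur - xstar), ycur i - ystar i⟫ := by
    rw [← sub_add_sub_cancel (yh i) (ycur i) (ystar i), map_sub, inner_add_right,
      neg_add_eq_sub, ← neg_sub, inner_neg_left, inner_neg_left]
    ring
  linarith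

end SPDHG

theorem spdhg_supermartingale_decrease_general
    {X : Type*} [NormedAddCommGroup X] [InnerProductSpace ℝ X] [FiniteDimensional ℝ X]
    {n : ℕ} {Y : Fin n → Type*} [∀ i, NormedAddCommGroup (Y i)]
    [∀ i, InnerProductSpace ℝ (Y i)] [∀ i, FiniteDimensional ℝ (Y i)]
    (g : X → ℝ) (fstar : ∀ i, Y i → ℝ)
    (hg : ConvexOn ℝ Set.univ g) (hfs : ∀ i, ConvexOn ℝ Set.univ (fstar i))
    (A : ∀ i, X →L[ℝ] Y i)
    (p σ : Fin n → ℝ) (τ : ℝ)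
    (hp : ∀ i, 0 < p i) (hpsum : ∑ i, p i = 1)
    (hτ : 0 < τ) (hσ : ∀ i, 0 < σ i)
    -- a primal-dual solution z^* = (x^*, y^*)
    (xstar : X) (ystar : ∀ i, Y i)
    (hsolx : -(AT A ystar) ∈ subdiffAt g xstar)
    (hsoly : ∀ i, A i xstar ∈ subdiffAt (fstar i) (ystar i))
    -- SPDHG iterates at step k: x^{k−1}, y^{k−1}, y^k, x^k, ŷ^{k+1}
    (xprev : X) (yprev ycur : ∀ i, Y i) (xcur : X)
    (hx : IsProx τ g
      (xprev - τ • AT A (fun j => ycur j + (p j)⁻¹ • (ycur j - yprev j))) xcur)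
    (yh : ∀ i, Y i)
    (hyh : ∀ i, IsProx (σ i) (fstar i) (ycur i + σ i • A i xcur) (yh i)) :
    -- E_k[V_{k+1}(x^k − x^*, y^{k+1} − y^*)]
    (∑ l, p l *
        ((1 / 2) * (τ⁻¹ * ‖xcur - xstar‖ ^ 2)
          - (∑ i, (p i)⁻¹ * ⟪A i (xcur - xstar),
              Function.update ycur l (yh l) i - ycur i⟫)
          + (1 / 2) * (∑ i, (σ i * p i)⁻¹ *
              ‖Function.update ycur l (yh l) i - ycur i‖ ^ 2)
          + (1 / 2) * (∑ i, (σ i * p i)⁻¹ *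
              ‖Function.update ycur l (yh l) i - ystar i‖ ^ 2)))
    ≤
    -- V_k(x^{k−1} − x^*, y^k − y^*)
    ((1 / 2) * (τ⁻¹ * ‖xprev - xstar‖ ^ 2)
      - (∑ i, (p i)⁻¹ * ⟪A i (xprev - xstar), ycur i - yprev i⟫)
      + (1 / 2) * (∑ i, (σ i * p i)⁻¹ * ‖ycur i - yprev i‖ ^ 2)
      + (1 / 2) * (∑ i, (σ i * p i)⁻¹ * ‖ycur i - ystar i‖ ^ 2))
    -- − V(z^k − z^{k−1})
    - ((1 / 2) * (τ⁻¹ * ‖xcur - xprev‖ ^ 2)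
        + (1 / 2) * (∑ i, (σ i * p i)⁻¹ * ‖ycur i - yprev i‖ ^ 2)
        + ∑ i, (p i)⁻¹ * ⟪A i (xcur - xprev), ycur i - yprev i⟫) := by
  have hprimal := spdhg_primal_estimate A hg hτ hsolx hx
  have hdual := sum_le_sum fun i (_ : i ∈ univ) => spdhg_dual_estimate A hfs hσ hsoly hyh i
  have hcross : ∑ i, (p i)⁻¹ * ⟪A i (xprev - xstar), ycur i - yprev i⟫
      + ∑ i, (p i)⁻¹ * ⟪A i (xcur - xprev), ycur i - yprev i⟫
      = ∑ i, (p i)⁻¹ * ⟪A i (xcur - xstar), ycur i - yprev i⟫ := by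
    rw [← sum_add_distrib]
    refine sum_congr rfl fun i _ => ?_
    rw [← mul_add, ← inner_add_left, ← map_add, add_comm, sub_add_sub_cancel]
  calc _ = ∑ l, p l * (((1 / 2) * (τ⁻¹ * ‖xcur - xstar‖ ^ 2)
          + (1 / 2) * (∑ i, (σ i * p i)⁻¹ * ‖ycur i - ystar i‖ ^ 2))
        + (p l)⁻¹ * (-⟪A l (xcur - xstar), yh l - ycur l⟫
          + (σ l)⁻¹ * (‖yh l - ycur l‖ ^ 2 + ‖yh l - ystar l‖ ^ 2 - ‖ycur l - ystar l‖ ^ 2)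
            / 2)) := by
        refine sum_congr rfl fun l _ => ?_
        rw [Fintype.sum_update_eq_self_of_eq_zero
            (fun i y => (p i)⁻¹ * ⟪A i (xcur - xstar), y - ycur i⟫) (by simp),
          Fintype.sum_update_eq_self_of_eq_zero
            (fun i y => (σ i * p i)⁻¹ * ‖y - ycur i‖ ^ 2) (by simp),
          Fintype.sum_update_eq_add_sub (fun i y => (σ i * p i)⁻¹ * ‖y - ystar i‖ ^ 2)]
        field_simp
        ring
    _ = _ := sum_mul_add_inv_mul (fun l => (hp l).ne') hpsum _
    _ ≤ _ := by linarith

/-- Supermartingale-type decrease towards a fixed solution (key inequality in the proof of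
Theorem 4.3): for any fixed primal-dual solution `z^* = (x^*, y^*) ∈ Z^*` and every `k ≥ 1`,
`E_k[V_{k+1}(x^k − x^*, y^{k+1} − y^*)] ≤ V_k(x^{k−1} − x^*, y^k − y^*) − V(z^k − z^{k−1})`,
where `E_k` is the `p`-weighted average over the index `i_k` drawn at step `k`. -/
theorem spdhg_supermartingale_decrease
    {X : Type*} [NormedAddCommGroup X] [InnerProductSpace ℝ X] [FiniteDimensional ℝ X]
    {n : ℕ} {Y : Fin n → Type*} [∀ i, NormedAddCommGroup (Y i)]
    [∀ i, InnerProductSpace ℝ (Y i)] [∀ i, FiniteDimensional ℝ (Y i)]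
    (g : X → ℝ) (fstar : ∀ i, Y i → ℝ)
    (hg : ConvexOn ℝ Set.univ g) (hfs : ∀ i, ConvexOn ℝ Set.univ (fstar i))
    (A : ∀ i, X →L[ℝ] Y i)
    (p σ : Fin n → ℝ) (τ γ : ℝ)
    (hp : ∀ i, 0 < p i) (hpsum : ∑ i, p i = 1)
    (hτ : 0 < τ) (hσ : ∀ i, 0 < σ i) (hγ0 : 0 < γ) (hγ1 : γ < 1)
    (hstep : ∀ i, (p i)⁻¹ * τ * σ i * ‖A i‖ ^ 2 ≤ γ ^ 2)
    -- a primal-dual solution z^* = (x^*, y^*)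
    (xstar : X) (ystar : ∀ i, Y i)
    (hsolx : -(AT A ystar) ∈ subdiffAt g xstar)
    (hsoly : ∀ i, A i xstar ∈ subdiffAt (fstar i) (ystar i))
    -- SPDHG iterates at step k: x^{k−1}, y^{k−1}, y^k, x^k, ŷ^{k+1}
    (xprev : X) (yprev ycur : ∀ i, Y i) (xcur : X)
    (hx : IsProx τ g
      (xprev - τ • AT A (fun j => ycur j + (p j)⁻¹ • (ycur j - yprev j))) xcur)
    (yh : ∀ i, Y i)
    (hyh : ∀ i, IsProx (σ i) (fstar i) (ycur i + σ i • A i xcur) (yh i)) :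
    -- E_k[V_{k+1}(x^k − x^*, y^{k+1} − y^*)]
    (∑ l, p l *
        ((1 / 2) * (τ⁻¹ * ‖xcur - xstar‖ ^ 2)
          - (∑ i, (p i)⁻¹ * ⟪A i (xcur - xstar),
              Function.update ycur l (yh l) i - ycur i⟫)
          + (1 / 2) * (∑ i, (σ i * p i)⁻¹ *
              ‖Function.update ycur l (yh l) i - ycur i‖ ^ 2)
          + (1 / 2) * (∑ i, (σ i * p i)⁻¹ *
              ‖Function.update ycur l (yh l) i - ystar i‖ ^ 2)))
    ≤
    -- V_k(x^{k−1} − x^*, y^k − y^*)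
    ((1 / 2) * (τ⁻¹ * ‖xprev - xstar‖ ^ 2)
      - (∑ i, (p i)⁻¹ * ⟪A i (xprev - xstar), ycur i - yprev i⟫)
      + (1 / 2) * (∑ i, (σ i * p i)⁻¹ * ‖ycur i - yprev i‖ ^ 2)
      + (1 / 2) * (∑ i, (σ i * p i)⁻¹ * ‖ycur i - ystar i‖ ^ 2))
    -- − V(z^k − z^{k−1})
    - ((1 / 2) * (τ⁻¹ * ‖xcur - xprev‖ ^ 2)
        + (1 / 2) * (∑ i, (σ i * p i)⁻¹ * ‖ycur i - yprev i‖ ^ 2)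
        + ∑ i, (p i)⁻¹ * ⟪A i (xcur - xprev), ycur i - yprev i⟫) :=
  spdhg_supermartingale_decrease_general g fstar hg hfs A p σ τ hp hpsum hτ hσ xstar ystar hsolx
    hsoly xprev yprev ycur xcur hx yh hyh
end
end

section
/- Operator inclusions and distance identity (Lemma 4.4): with q^k = (1⊗x^k, 1⊗y^k), q̂^{k+1} = T(q^k) and ẑ^{k+1} = (x^{k+1}, ŷ^{k+1}), one has (H − N) q^k ∈ (B + H) q̂^{k+1} and (N − H)(q̂^{k+1} − q^k) ∈ (B + N) q̂^{k+1}; moreover E_k[dist²(0, F ẑ^{k+1})] = dist²_{P̄}(0, (B + N) q̂^{k+1}), where dist²_{P̄} weights the i-th block by p_i. -/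
/-! The inclusions are the optimality conditions `t⁻¹ • (u - prox_{t h} u) ∈ ∂h (prox_{t h} u)`
of the dual and primal proximal steps, rearranged into operator form. The distance identity
holds because the constraint set of the right-hand infimum is a product over the blocks `i`,
so the `p`-weighted infimum splits into the `p`-weighted sum of the blockwise infima. -/

noncomputable section

open Finset

local notation "⟪" x ", " y "⟫" => @inner ℝ _ _ x y

open Filter Set Topology

theorem le_of_forall_mem_Ioc_le_add_mul {a b c : ℝ}
    (h : ∀ s ∈ Ioc (0 : ℝ) 1, a ≤ b + s * c) : a ≤ b := by
  have hlim : Tendsto (fun s : ℝ => b + s * c) (𝓝[>] 0) (𝓝 b) :=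
    (Continuous.tendsto' (by fun_prop) 0 b (by simp)).mono_left nhdsWithin_le_nhds
  exact ge_of_tendsto hlim (mem_of_superset (Ioc_mem_nhdsGT one_pos) h)

section Prox

variable {E : Type*} [NormedAddCommGroup E] [InnerProductSpace ℝ E]

theorem IsProx.mem_subdiffAt {t : ℝ} {h : E → ℝ} {u v : E} (hv : IsProx t h u v)
    (ht : 0 < t) (hconv : ConvexOn ℝ univ h) : t⁻¹ • (u - v) ∈ subdiffAt h v := by
  intro z
  -- compare `v` with the points `v + s • (z - v)` of the segment and let `s → 0`
  have key : ∀ s ∈ Ioc (0 : ℝ) 1,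
      t * (h v - h z) + ⟪u - v, z - v⟫ ≤ 0 + s * (‖z - v‖ ^ 2 / 2) := by
    rintro s ⟨hs0, hs1⟩
    set w := v + s • (z - v)
    have h2t : 0 < 2 * t := by positivity
    have hprox : 2 * t * (h v - h w) ≤ ‖w - u‖ ^ 2 - ‖v - u‖ ^ 2 := by
      have := hv w
      rw [mul_comm, ← le_div_iff₀ h2t, sub_div]
      linarith
    have hconvex : h w ≤ h v + s * (h z - h v) := by
      have := hconv.2 (mem_univ v) (mem_univ z) (sub_nonneg.2 hs1) hs0.le (sub_add_cancel 1 s)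
      rw [show (1 - s) • v + s • z = w by module, smul_eq_mul, smul_eq_mul] at this
      linarith
    have hnorm : ‖w - u‖ ^ 2
        = ‖v - u‖ ^ 2 - 2 * s * ⟪u - v, z - v⟫ + s ^ 2 * ‖z - v‖ ^ 2 := by
      rw [show w - u = (v - u) + s • (z - v) by simp only [w]; abel, norm_add_sq_real,
        real_inner_smul_right, norm_smul, Real.norm_eq_abs, abs_of_pos hs0, mul_pow,
        ← neg_sub u v, inner_neg_left]
      ring
    have hscaled : s * (2 * t * (h v - h z) + 2 * ⟪u - v, z - v⟫) ≤ s * (s * ‖z - v‖ ^ 2) := by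
      linear_combination hprox + 2 * t * hconvex + hnorm
    linarith [le_of_mul_le_mul_left hscaled hs0]
  have hlimit := le_of_forall_mem_Ioc_le_add_mul key
  rw [real_inner_smul_left, inv_mul_eq_div]
  have : ⟪u - v, z - v⟫ / t ≤ h z - h v := by
    rw [div_le_iff₀ ht]; linarith
  linarith

end Prox

theorem sInf_sum_mul_of_mem_eq_sum_mul_sInf {ι : Type*} [Fintype ι] {p : ι → ℝ}
    (hp : ∀ i, 0 ≤ p i) {S : ι → Set ℝ} (hne : ∀ i, (S i).Nonempty)
    (hbdd : ∀ i, BddBelow (S i)) :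
    sInf {r | ∃ x : ι → ℝ, (∀ i, x i ∈ S i) ∧ r = ∑ i, p i * x i}
      = ∑ i, p i * sInf (S i) := by
  have hTne : {r | ∃ x : ι → ℝ, (∀ i, x i ∈ S i) ∧ r = ∑ i, p i * x i}.Nonempty :=
    ⟨_, fun i => (hne i).some, fun i => (hne i).some_mem, rfl⟩
  choose m hm using hbdd
  have hTbdd : BddBelow {r | ∃ x : ι → ℝ, (∀ i, x i ∈ S i) ∧ r = ∑ i, p i * x i} := by
    refine ⟨∑ i, p i * m i, ?_⟩
    rintro _ ⟨x, hx, rfl⟩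
    gcongr with i
    exacts [hp i, hm i (hx i)]
  apply le_antisymm
  · refine le_of_forall_mem_Ioc_le_add_mul (c := ∑ i, p i) fun ε ⟨hε, _⟩ => ?_
    choose x hxS hxlt using fun i =>
      exists_lt_of_csInf_lt (hne i) (lt_add_of_pos_right (sInf (S i)) hε)
    calc sInf _ ≤ ∑ i, p i * x i := csInf_le hTbdd ⟨x, hxS, rfl⟩
      _ ≤ ∑ i, p i * (sInf (S i) + ε) := by
        gcongr with i
        exacts [hp i, (hxlt i).le]
      _ = ∑ i, p i * sInf (S i) + ε * ∑ i, p i := by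
        simp only [mul_add, Finset.sum_add_distrib, ← Finset.sum_mul, mul_comm ε]
  · refine le_csInf hTne ?_
    rintro _ ⟨x, hx, rfl⟩
    gcongr with i
    exacts [hp i, csInf_le ⟨m i, hm i⟩ (hx i)]

section Adjoint

variable {X : Type*} [NormedAddCommGroup X] [InnerProductSpace ℝ X] [CompleteSpace X]
  {n : ℕ} {Y : Fin n → Type*} [∀ i, NormedAddCommGroup (Y i)]
  [∀ i, InnerProductSpace ℝ (Y i)] [∀ i, CompleteSpace (Y i)]

theorem AT_sub (A : ∀ i, X →L[ℝ] Y i) (y y' : ∀ i, Y i) :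
    AT A (y - y') = AT A y - AT A y' := by
  simp only [AT, Pi.sub_apply, map_sub, Finset.sum_sub_distrib]

theorem AT_update (A : ∀ i, X →L[ℝ] Y i) (y : ∀ i, Y i) (i : Fin n) (w : Y i) :
    AT A (Function.update y i w) = AT A y + (A i).adjoint (w - y i) := by
  rw [AT, AT, ← Finset.add_sum_erase _ _ (Finset.mem_univ i),
    ← Finset.add_sum_erase _ _ (Finset.mem_univ i), Function.update_self, map_sub,
    Finset.sum_congr rfl fun j hj => by rw [Function.update_of_ne (Finset.ne_of_mem_erase hj)]]
  abel

end Adjoint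

theorem spdhg_operator_inclusions_and_distance_identity_general
    {X : Type*} [NormedAddCommGroup X] [InnerProductSpace ℝ X] [FiniteDimensional ℝ X]
    {n : ℕ} {Y : Fin n → Type*} [∀ i, NormedAddCommGroup (Y i)]
    [∀ i, InnerProductSpace ℝ (Y i)] [∀ i, FiniteDimensional ℝ (Y i)]
    (g : X → ℝ) (fstar : ∀ i, Y i → ℝ)
    (hg : ConvexOn ℝ Set.univ g) (hfs : ∀ i, ConvexOn ℝ Set.univ (fstar i))
    (A : ∀ i, X →L[ℝ] Y i)
    (p σ : Fin n → ℝ) (τ : ℝ)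
    (hp : ∀ i, 0 < p i)
    (hτ : 0 < τ) (hσ : ∀ i, 0 < σ i)
    -- current iterate (x^k, y^k) and the components of q̂^{k+1} = T(1⊗x^k, 1⊗y^k)
    (xk : X) (yk : ∀ j, Y j) (yh : ∀ j, Y j)
    (hyh : ∀ j, IsProx (σ j) (fstar j) (yk j + σ j • A j xk) (yh j))
    (xhat : Fin n → X)
    (hxhat : ∀ i, IsProx τ g
      (xk - τ • AT A (Function.update yk i
        (yk i + (1 + (p i)⁻¹) • (yh i - yk i)))) (xhat i)) :
    -- (H − N) q^k ∈ (B + H) q̂^{k+1}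
    ((∀ i, (τ⁻¹ • xk + (1 + (p i)⁻¹) • (A i).adjoint (yk i) - AT A yk)
        - (τ⁻¹ • xhat i + (1 + (p i)⁻¹) • (A i).adjoint (yh i))
        ∈ subdiffAt g (xhat i))
      ∧ (∀ j, ((σ j)⁻¹ • yk j + A j xk) - (σ j)⁻¹ • yh j
          ∈ subdiffAt (fstar j) (yh j)))
    ∧
    -- (N − H)(q̂^{k+1} − q^k) ∈ (B + N) q̂^{k+1}
    ((∀ i, (AT A (yh - yk) - τ⁻¹ • (xhat i - xk)
          - (1 + (p i)⁻¹) • (A i).adjoint (yh i - yk i))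
        - AT A yh ∈ subdiffAt g (xhat i))
      ∧ (∀ i j, (-(A j (xhat i - xk)) - (σ j)⁻¹ • (yh j - yk j)) - (-(A j (xhat i)))
          ∈ subdiffAt (fstar j) (yh j)))
    ∧
    -- E_k[dist²(0, F ẑ^{k+1})] = dist²_{P̄}(0, (B + N) q̂^{k+1})
    ((∑ i, p i * sInf {r : ℝ | ∃ u ∈ subdiffAt g (xhat i), ∃ v : ∀ j, Y j,
        (∀ j, v j ∈ subdiffAt (fstar j) (yh j)) ∧
        r = ‖u + AT A yh‖ ^ 2 + ∑ j, ‖v j - A j (xhat i)‖ ^ 2})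
      = sInf {r : ℝ | ∃ u : Fin n → X, ∃ v : Fin n → ∀ j, Y j,
          (∀ i, u i ∈ subdiffAt g (xhat i)) ∧
          (∀ i j, v i j ∈ subdiffAt (fstar j) (yh j)) ∧
          r = ∑ i, p i * (‖u i + AT A yh‖ ^ 2 + ∑ j, ‖v i j - A j (xhat i)‖ ^ 2)}) := by
  have hdual : ∀ j, ((σ j)⁻¹ • yk j + A j xk) - (σ j)⁻¹ • yh j
      ∈ subdiffAt (fstar j) (yh j) := fun j => by
    convert (hyh j).mem_subdiffAt (hσ j) (hfs j) using 1
    rw [smul_sub, smul_add, inv_smul_smul₀ (hσ j).ne']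
  have hprimal : ∀ i, (τ⁻¹ • xk + (1 + (p i)⁻¹) • (A i).adjoint (yk i) - AT A yk)
      - (τ⁻¹ • xhat i + (1 + (p i)⁻¹) • (A i).adjoint (yh i)) ∈ subdiffAt g (xhat i) :=
    fun i => by
      convert (hxhat i).mem_subdiffAt hτ hg using 1
      rw [AT_update, add_sub_cancel_left, map_smul, map_sub]
      match_scalars <;> field_simp
  refine ⟨⟨hprimal, hdual⟩, ⟨fun i => ?_, fun i j => ?_⟩, ?_⟩
  · convert hprimal i using 1
    rw [AT_sub, map_sub]
    module
  · convert hdual j using 1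
    rw [map_sub]
    module
  rw [← sInf_sum_mul_of_mem_eq_sum_mul_sInf (fun i => (hp i).le) (fun i => ?_) (fun i => ?_)]
  · congr 1
    ext r
    constructor
    · rintro ⟨x, hx, rfl⟩
      choose u hu v hv hx using hx
      exact ⟨u, v, hu, hv, by simp only [hx]⟩
    · rintro ⟨u, v, hu, hv, rfl⟩
      exact ⟨_, fun i => ⟨u i, hu i, v i, hv i, rfl⟩, rfl⟩
  · exact ⟨_, _, hprimal i, _, hdual, rfl⟩
  · refine ⟨0, ?_⟩
    rintro _ ⟨u, -, v, -, rfl⟩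
    positivity

/-- Operator inclusions and distance identity (Lemma 4.4).  With the duplicated current
iterate `q^k = (1⊗x^k, 1⊗y^k)` and `q̂^{k+1} = T(q^k)` (so `q̂^{k+1} = ((x̂(i))_i, (ŷ)_i)`
with `ŷ = yh` the full dual update and `x̂(i) = xhat i`), one has, componentwise,
`(H − N) q^k ∈ (B + H) q̂^{k+1}` and `(N − H)(q̂^{k+1} − q^k) ∈ (B + N) q̂^{k+1}`;
moreover `E_k[dist²(0, F ẑ^{k+1})] = dist²_{P̄}(0, (B + N) q̂^{k+1})`, where
`ẑ^{k+1} = (x^{k+1}, ŷ^{k+1}) = (x̂(i_k), ŷ)`, `F(x,y) = (∂g(x) + A^⊤y) × (∂f^*(y) − Ax)`,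
and `dist²_{P̄}` weights block `i` by `p_i`. -/
theorem spdhg_operator_inclusions_and_distance_identity
    {X : Type*} [NormedAddCommGroup X] [InnerProductSpace ℝ X] [FiniteDimensional ℝ X]
    {n : ℕ} {Y : Fin n → Type*} [∀ i, NormedAddCommGroup (Y i)]
    [∀ i, InnerProductSpace ℝ (Y i)] [∀ i, FiniteDimensional ℝ (Y i)]
    (g : X → ℝ) (fstar : ∀ i, Y i → ℝ)
    (hg : ConvexOn ℝ Set.univ g) (hfs : ∀ i, ConvexOn ℝ Set.univ (fstar i))
    (A : ∀ i, X →L[ℝ] Y i)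
    (p σ : Fin n → ℝ) (τ : ℝ)
    (hp : ∀ i, 0 < p i) (hpsum : ∑ i, p i = 1)
    (hτ : 0 < τ) (hσ : ∀ i, 0 < σ i)
    -- current iterate (x^k, y^k) and the components of q̂^{k+1} = T(1⊗x^k, 1⊗y^k)
    (xk : X) (yk : ∀ j, Y j) (yh : ∀ j, Y j)
    (hyh : ∀ j, IsProx (σ j) (fstar j) (yk j + σ j • A j xk) (yh j))
    (xhat : Fin n → X)
    (hxhat : ∀ i, IsProx τ g
      (xk - τ • AT A (Function.update yk i
        (yk i + (1 + (p i)⁻¹) • (yh i - yk i)))) (xhat i)) :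
    -- (H − N) q^k ∈ (B + H) q̂^{k+1}
    ((∀ i, (τ⁻¹ • xk + (1 + (p i)⁻¹) • (A i).adjoint (yk i) - AT A yk)
        - (τ⁻¹ • xhat i + (1 + (p i)⁻¹) • (A i).adjoint (yh i))
        ∈ subdiffAt g (xhat i))
      ∧ (∀ j, ((σ j)⁻¹ • yk j + A j xk) - (σ j)⁻¹ • yh j
          ∈ subdiffAt (fstar j) (yh j)))
    ∧
    -- (N − H)(q̂^{k+1} − q^k) ∈ (B + N) q̂^{k+1}
    ((∀ i, (AT A (yh - yk) - τ⁻¹ • (xhat i - xk)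
          - (1 + (p i)⁻¹) • (A i).adjoint (yh i - yk i))
        - AT A yh ∈ subdiffAt g (xhat i))
      ∧ (∀ i j, (-(A j (xhat i - xk)) - (σ j)⁻¹ • (yh j - yk j)) - (-(A j (xhat i)))
          ∈ subdiffAt (fstar j) (yh j)))
    ∧
    -- E_k[dist²(0, F ẑ^{k+1})] = dist²_{P̄}(0, (B + N) q̂^{k+1})
    ((∑ i, p i * sInf {r : ℝ | ∃ u ∈ subdiffAt g (xhat i), ∃ v : ∀ j, Y j,
        (∀ j, v j ∈ subdiffAt (fstar j) (yh j)) ∧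
        r = ‖u + AT A yh‖ ^ 2 + ∑ j, ‖v j - A j (xhat i)‖ ^ 2})
      = sInf {r : ℝ | ∃ u : Fin n → X, ∃ v : Fin n → ∀ j, Y j,
          (∀ i, u i ∈ subdiffAt g (xhat i)) ∧
          (∀ i j, v i j ∈ subdiffAt (fstar j) (yh j)) ∧
          r = ∑ i, p i * (‖u i + AT A yh‖ ^ 2 + ∑ j, ‖v i j - A j (xhat i)‖ ^ 2)}) :=
  spdhg_operator_inclusions_and_distance_identity_general g fstar hg hfs A p σ τ hp hτ hσ xk yk yh
    hyh xhat hxhat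
end
end
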